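/- Let X be a topological space with an increasing sequence of open sets W_1 ⊆ W_2 ⊆ ⋯ ⊆ W_N = X and open sets V_k with W_k = W_{k-1} ∪ V_k for k ≥ 2, such that each V_k has the real cohomology of a point, each intersection W_{k-1} ∩ V_k has the real cohomology of a sphere S^{2m_k − 1} for some m_k ≥ 1, and W_1 has the cohomology of a point. Then H^{odd}(X; ℝ) = 0 and dim H^{2j}(X; ℝ) = |{k ∈ {2,…,N} : m_k = j}| + [j = 0]. -/

import Mathlib

open Module

private lemma mv_range_eq_bot {M N : Type*} [AddCommGroup M] [Module ℝ M]
    [AddCommGroup N] [Module ℝ N] [Subsingleton M] (f : M →ₗ[ℝ] N) :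
    LinearMap.range f = ⊥ := by
  rw [LinearMap.range_eq_bot]
  ext x
  simp [Subsingleton.elim x 0]

private lemma mv_subsingleton_of_inj {M N : Type*} [AddCommGroup M] [Module ℝ M]
    [AddCommGroup N] [Module ℝ N] [Subsingleton N] (f : M →ₗ[ℝ] N)
    (hf : LinearMap.ker f = ⊥) : Subsingleton M := by
  constructor
  intro x y
  have := LinearMap.ker_eq_bot.mp hf
  exact this (Subsingleton.elim (f x) (f y))

private lemma mv_finrank_subsingleton {M : Type*} [AddCommGroup M] [Module ℝ M]
    [Subsingleton M] : finrank ℝ M = 0 :=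
  finrank_zero_of_subsingleton

/-- **Iterated Mayer–Vietoris computation of Betti numbers.**
Let `X` be a topological space with an increasing sequence of open sets
`W₁ ⊆ W₂ ⊆ ⋯ ⊆ W_N = X` and open sets `V_k` with `W_k = W_{k-1} ∪ V_k` for
`2 ≤ k ≤ N`.  Real singular cohomology is abstracted as: `HW k j = H^j(W_k; ℝ)`,
`HV k j = H^j(V_k; ℝ)`, `HI k j = H^j(W_{k-1} ∩ V_k; ℝ)`, linked for each
`2 ≤ k ≤ N` by the Mayer–Vietoris long exact sequence
`0 → H⁰(W_k) → H⁰(W_{k-1}) ⊕ H⁰(V_k) → H⁰(W_{k-1} ∩ V_k) → H¹(W_k) → ⋯`.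
Assume: `W₁` and each `V_k` have the cohomology of a point (`H⁰ ≅ ℝ`, `H^j = 0`
for `j ≥ 1`); each `W_{k-1} ∩ V_k` has the cohomology of a sphere `S^{2 m_k - 1}`
with `m_k ≥ 1` (`H⁰ ≅ ℝ`, `H^{2 m_k - 1} ≅ ℝ`, all other groups zero); and each
`W_k` is connected (`H⁰(W_k) ≅ ℝ`).  Then `H^{odd}(X; ℝ) = 0` and
`dim H^{2j}(X; ℝ) = #{k ∈ {2,…,N} : m_k = j} + [j = 0]`. -/
theorem iterated_mayer_vietoris (N : ℕ) (hN : 1 ≤ N)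
    (HW HV HI : ℕ → ℕ → Type*)
    [∀ k j, AddCommGroup (HW k j)] [∀ k j, Module ℝ (HW k j)]
    [∀ k j, FiniteDimensional ℝ (HW k j)]
    [∀ k j, AddCommGroup (HV k j)] [∀ k j, Module ℝ (HV k j)]
    [∀ k j, FiniteDimensional ℝ (HV k j)]
    [∀ k j, AddCommGroup (HI k j)] [∀ k j, Module ℝ (HI k j)]
    [∀ k j, FiniteDimensional ℝ (HI k j)]
    (m : ℕ → ℕ) (hm : ∀ k, 2 ≤ k → k ≤ N → 1 ≤ m k)
    -- the Mayer–Vietoris long exact sequences, for `2 ≤ k ≤ N`: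
    (a : ∀ k j, HW k j →ₗ[ℝ] HW (k - 1) j × HV k j)
    (b : ∀ k j, HW (k - 1) j × HV k j →ₗ[ℝ] HI k j)
    (δ : ∀ k j, HI k j →ₗ[ℝ] HW k (j + 1))
    (ha0 : ∀ k, 2 ≤ k → k ≤ N → Function.Injective (a k 0))
    (hex_ab : ∀ k, 2 ≤ k → k ≤ N → ∀ j, Function.Exact (a k j) (b k j))
    (hex_bδ : ∀ k, 2 ≤ k → k ≤ N → ∀ j, Function.Exact (b k j) (δ k j))
    (hex_δa : ∀ k, 2 ≤ k → k ≤ N → ∀ j, Function.Exact (δ k j) (a k (j + 1)))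
    -- `W₁` has the cohomology of a point:
    (hW1_zero : finrank ℝ (HW 1 0) = 1)
    (hW1_pos : ∀ j, 1 ≤ j → Subsingleton (HW 1 j))
    -- each `V_k` has the cohomology of a point:
    (hV_zero : ∀ k, 2 ≤ k → k ≤ N → finrank ℝ (HV k 0) = 1)
    (hV_pos : ∀ k, 2 ≤ k → k ≤ N → ∀ j, 1 ≤ j → Subsingleton (HV k j))
    -- each intersection `W_{k-1} ∩ V_k` has the cohomology of `S^{2 m_k - 1}`:
    (hI_zero : ∀ k, 2 ≤ k → k ≤ N → finrank ℝ (HI k 0) = 1)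
    (hI_top : ∀ k, 2 ≤ k → k ≤ N → finrank ℝ (HI k (2 * m k - 1)) = 1)
    (hI_other : ∀ k, 2 ≤ k → k ≤ N → ∀ j, j ≠ 0 → j ≠ 2 * m k - 1 →
      Subsingleton (HI k j))
    -- each `W_k` is connected:
    (hW_conn : ∀ k, 1 ≤ k → k ≤ N → finrank ℝ (HW k 0) = 1) :
    (∀ j, Subsingleton (HW N (2 * j + 1))) ∧
    (∀ j, finrank ℝ (HW N (2 * j)) =
      ((Finset.Icc 2 N).filter fun k => m k = j).card + if j = 0 then 1 else 0) := by

  suffices H : ∀ k, 1 ≤ k → k ≤ N →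
      (∀ l, Subsingleton (HW k (2 * l + 1))) ∧
      (∀ l, finrank ℝ (HW k (2 * l)) =
        ((Finset.Icc 2 k).filter fun i => m i = l).card + if l = 0 then 1 else 0) by
    exact H N hN le_rfl
  intro k
  induction k with
  | zero => omega
  | succ n ih =>
    intro _ hkN
    rcases Nat.eq_zero_or_pos n with hn0 | hn1
    · -- base case k = 1
      subst hn0
      constructor
      · intro l; exact hW1_pos (2 * l + 1) (by omega)
      · intro l
        rcases Nat.eq_zero_or_pos l with rfl | hl
        · simpa using hW1_zero
        · have : Subsingleton (HW 1 (2 * l)) := hW1_pos (2 * l) (by omega)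
          have h0 : finrank ℝ (HW 1 (2 * l)) = 0 := mv_finrank_subsingleton
          rw [h0]
          have : ((Finset.Icc 2 1).filter fun i => m i = l) = ∅ := by
            simp [Finset.Icc_eq_empty_of_lt]
          simp [this, Nat.pos_iff_ne_zero.mp hl]
    · -- inductive step: k = n + 1 with n ≥ 1
      have hnN : n ≤ N := by omega
      have hk2 : 2 ≤ n + 1 := by omega
      obtain ⟨ihodd, iheven⟩ := ih hn1 hnN
      have hmk : 1 ≤ m (n + 1) := hm (n + 1) hk2 hkN
      -- subsingletons of HW n in odd degrees
      have hWodd : ∀ j, ¬ 2 ∣ j → Subsingleton (HW n j) := by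
        intro j hj
        obtain ⟨l, hl⟩ : ∃ l, j = 2 * l + 1 := ⟨j / 2, by omega⟩
        rw [hl]; exact ihodd l
      have hVs : ∀ j, 1 ≤ j → Subsingleton (HV (n + 1) j) := hV_pos (n + 1) hk2 hkN
      -- the odd claim
      have hodd : ∀ l, Subsingleton (HW (n + 1) (2 * l + 1)) := by
        intro l
        have hker : LinearMap.ker (a (n + 1) (2 * l + 1)) =
            LinearMap.range (δ (n + 1) (2 * l)) :=
          LinearMap.exact_iff.mp (hex_δa (n + 1) hk2 hkN (2 * l))
        have hbot : LinearMap.range (δ (n + 1) (2 * l)) = ⊥ := by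
          rcases Nat.eq_zero_or_pos l with rfl | hl
          · -- l = 0 : show b at degree 0 is surjective
            have hexab := LinearMap.exact_iff.mp (hex_ab (n + 1) hk2 hkN 0)
            have hr : finrank ℝ (LinearMap.range (a (n + 1) 0)) = 1 := by
              rw [LinearMap.finrank_range_of_inj (ha0 (n + 1) hk2 hkN)]
              exact hW_conn (n + 1) (by omega) hkN
            have hkerb : finrank ℝ (LinearMap.ker (b (n + 1) 0)) = 1 := by
              rw [hexab]; exact hr
            have hsrc : finrank ℝ (HW (n + 1 - 1) 0 × HV (n + 1) 0) = 2 := by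
              show finrank ℝ (HW n 0 × HV (n + 1) 0) = 2
              rw [Module.finrank_prod, hW_conn n hn1 hnN, hV_zero (n + 1) hk2 hkN]
            have hrn := LinearMap.finrank_range_add_finrank_ker (b (n + 1) 0)
            rw [hsrc, hkerb] at hrn
            have hrangeb : LinearMap.range (b (n + 1) 0) = ⊤ := by
              apply Submodule.eq_top_of_finrank_eq
              rw [hI_zero (n + 1) hk2 hkN]; omega
            have hkerδ : LinearMap.ker (δ (n + 1) 0) = ⊤ := by
              rw [LinearMap.exact_iff.mp (hex_bδ (n + 1) hk2 hkN 0), hrangeb]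
            rw [LinearMap.range_eq_bot]
            ext x
            simpa using (LinearMap.ker_eq_top.mp hkerδ ▸ rfl :
              δ (n + 1) 0 = (0 : _ →ₗ[ℝ] _)) ▸ rfl
          · have : Subsingleton (HI (n + 1) (2 * l)) :=
              hI_other (n + 1) hk2 hkN (2 * l) (by omega) (by omega)
            exact mv_range_eq_bot _
        have : Subsingleton (HW n (2 * l + 1) × HV (n + 1) (2 * l + 1)) := by
          have h1 : Subsingleton (HW n (2 * l + 1)) := ihodd l
          have h2 : Subsingleton (HV (n + 1) (2 * l + 1)) := hVs _ (by omega)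
          infer_instance
        exact @mv_subsingleton_of_inj _ _ _ _ _ _ this (a (n + 1) (2 * l + 1))
          (by rw [hker, hbot])
      refine ⟨hodd, ?_⟩
      -- the even claim
      intro l
      have hcard : ((Finset.Icc 2 (n + 1)).filter fun i => m i = l).card =
          ((Finset.Icc 2 n).filter fun i => m i = l).card +
            (if m (n + 1) = l then 1 else 0) := by
        have : Finset.Icc 2 (n + 1) = insert (n + 1) (Finset.Icc 2 n) := by
          rw [← Finset.insert_Icc_right_eq_Icc_add_one (by omega : 2 ≤ n + 1)]
        rw [this, Finset.filter_insert]
        split <;> simp [Finset.mem_Icc]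
      rcases Nat.eq_zero_or_pos l with rfl | hl
      · -- l = 0
        have h0 : finrank ℝ (HW (n + 1) 0) = 1 := hW_conn (n + 1) (by omega) hkN
        have hempty : ((Finset.Icc 2 (n + 1)).filter fun i => m i = 0) = ∅ := by
          apply Finset.filter_eq_empty_iff.mpr
          intro i hi
          have := hm i (Finset.mem_Icc.mp hi).1 (le_trans (Finset.mem_Icc.mp hi).2 hkN)
          omega
        simp [h0, hempty]
      · -- l = t + 1, degree 2l = 2t + 2
        obtain ⟨t, rfl⟩ : ∃ t, l = t + 1 := ⟨l - 1, by omega⟩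
        have hdeg : 2 * (t + 1) = (2 * t + 1) + 1 := by omega
        -- δ at degree 2t+1 is injective
        have hsub : Subsingleton (HW n (2 * t + 1) × HV (n + 1) (2 * t + 1)) := by
          have h1 : Subsingleton (HW n (2 * t + 1)) := ihodd t
          have h2 : Subsingleton (HV (n + 1) (2 * t + 1)) := hVs _ (by omega)
          infer_instance
        have hkerδ : LinearMap.ker (δ (n + 1) (2 * t + 1)) = ⊥ := by
          rw [LinearMap.exact_iff.mp (hex_bδ (n + 1) hk2 hkN (2 * t + 1))]
          exact @mv_range_eq_bot _ _ _ _ _ _ hsub _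
        have hrδ : finrank ℝ (LinearMap.range (δ (n + 1) (2 * t + 1))) =
            if m (n + 1) = t + 1 then 1 else 0 := by
          rw [LinearMap.finrank_range_of_inj (LinearMap.ker_eq_bot.mp hkerδ)]
          by_cases hmt : m (n + 1) = t + 1
          · rw [if_pos hmt]
            have : 2 * t + 1 = 2 * m (n + 1) - 1 := by omega
            rw [this]; exact hI_top (n + 1) hk2 hkN
          · rw [if_neg hmt]
            have : Subsingleton (HI (n + 1) (2 * t + 1)) :=
              hI_other (n + 1) hk2 hkN (2 * t + 1) (by omega) (by omega)
            exact mv_finrank_subsingleton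
        -- ker of a at degree 2t+2
        have hkera : finrank ℝ (LinearMap.ker (a (n + 1) ((2 * t + 1) + 1))) =
            if m (n + 1) = t + 1 then 1 else 0 := by
          rw [LinearMap.exact_iff.mp (hex_δa (n + 1) hk2 hkN (2 * t + 1))]
          exact hrδ
        -- range of a at degree 2t+2 is everything
        have hIsub : Subsingleton (HI (n + 1) ((2 * t + 1) + 1)) :=
          hI_other (n + 1) hk2 hkN ((2 * t + 1) + 1) (by omega) (by omega)
        have hrangea : LinearMap.range (a (n + 1) ((2 * t + 1) + 1)) = ⊤ := by
          rw [← LinearMap.exact_iff.mp (hex_ab (n + 1) hk2 hkN ((2 * t + 1) + 1))]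
          have hb0 : b (n + 1) ((2 * t + 1) + 1) = 0 :=
            LinearMap.ext fun x => @Subsingleton.elim _ hIsub _ _
          rw [hb0, LinearMap.ker_zero]
        have hVsub : Subsingleton (HV (n + 1) ((2 * t + 1) + 1)) := hVs _ (by omega)
        have hra : finrank ℝ (LinearMap.range (a (n + 1) ((2 * t + 1) + 1))) =
            finrank ℝ (HW n ((2 * t + 1) + 1)) := by
          rw [hrangea, finrank_top, Module.finrank_prod,
            @mv_finrank_subsingleton _ _ _ hVsub]
          exact Nat.add_zero _
        have hrn := LinearMap.finrank_range_add_finrank_ker (a (n + 1) ((2 * t + 1) + 1))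
        rw [hra, hkera] at hrn
        have hWn : finrank ℝ (HW n ((2 * t + 1) + 1)) =
            ((Finset.Icc 2 n).filter fun i => m i = t + 1).card := by
          have h2 : (2 * t + 1) + 1 = 2 * (t + 1) := by omega
          rw [h2, iheven (t + 1)]
          simp
        rw [hdeg, ← hrn, hWn, hcard]
        simp [add_comm]
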